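/- arXiv:1506.04478 — 5 statements merged into one kernel-verified Lean document; each statement's English description precedes it below -/
import Mathlib

section
/- The element -1 is a norm from Q_2(sqrt(n)) to Q_2 for n in {1, 2, -3, -6} and is not a norm for n in {-1, -2, 3, 6}, where n ranges over representatives of the nontrivial classes of Q_2*/(Q_2*)^2 together with 1. -/
/-!
`-1` is a norm from `ℚ₂(√n)` exactly when the form `x² - n y² + z²` has a nontrivial zero
over `ℚ₂`. For `n ∈ {1, 2}` there are rational solutions, and for `n ∈ {-3, -6}` one uses a
square root of `-7`, which exists by Hensel's lemma since `-7 ≡ 1 mod 8`. For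
`n ∈ {-1, -2, 3, 6}` a check modulo `8` shows that every zero of the form over `ℤ₂` has all
coordinates even, so no zero over `ℚ₂` can be scaled to a primitive one.
-/

open Polynomial

theorem ZMod.cast_eq_zero_of_sq_sub_mul_sq_add_sq_eq_zero {n : ℤ}
    (hn : n = -1 ∨ n = -2 ∨ n = 3 ∨ n = 6) {x y z : ZMod 8}
    (h : x ^ 2 - n * y ^ 2 + z ^ 2 = 0) :
    (ZMod.cast x : ZMod (2 ^ 1)) = 0 ∧ (ZMod.cast y : ZMod (2 ^ 1)) = 0 ∧
      (ZMod.cast z : ZMod (2 ^ 1)) = 0 := by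
  rcases hn with rfl | rfl | rfl | rfl <;> push_cast at h <;> revert x y z <;> decide

namespace PadicInt

theorem norm_two : ‖(2 : ℤ_[2])‖ = 2⁻¹ := by
  simpa using norm_p (p := 2)

theorem isSquare_of_eight_dvd_sub_one {a : ℤ_[2]} (h : (8 : ℤ_[2]) ∣ a - 1) : IsSquare a := by
  obtain ⟨c, hc⟩ := h
  -- Hensel's lemma at the approximate root `1`: `‖f 1‖ ≤ 1/8 < 1/4 = ‖f' 1‖²`.
  have hnorm : ‖(X ^ 2 - C a).aeval (1 : ℤ_[2])‖ <
      ‖(X ^ 2 - C a).derivative.aeval (1 : ℤ_[2])‖ ^ 2 := by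
    have hval : (X ^ 2 - C a).aeval (1 : ℤ_[2]) = 2 ^ 3 * -c := by
      simp only [map_sub, map_pow, aeval_X, aeval_C, Algebra.algebraMap_self, RingHom.id_apply]
      linear_combination -hc
    have hder : (X ^ 2 - C a).derivative.aeval (1 : ℤ_[2]) = 2 := by
      simp [one_add_one_eq_two]
    calc ‖(X ^ 2 - C a).aeval (1 : ℤ_[2])‖ = 2⁻¹ ^ 3 * ‖c‖ := by
          rw [hval, norm_mul, norm_pow, norm_two, norm_neg]
      _ ≤ 2⁻¹ ^ 3 := mul_le_of_le_one_right (by positivity) (norm_le_one c)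
      _ < ‖(X ^ 2 - C a).derivative.aeval (1 : ℤ_[2])‖ ^ 2 := by
          rw [hder, norm_two]; norm_num
  obtain ⟨z, hz, -⟩ := hensels_lemma hnorm
  refine ⟨z, ?_⟩
  simp only [map_sub, map_pow, aeval_X, aeval_C, Algebra.algebraMap_self, RingHom.id_apply] at hz
  linear_combination -hz

theorem dvd_iff_toZModPow_one_eq_zero {p : ℕ} [Fact p.Prime] (x : ℤ_[p]) :
    (p : ℤ_[p]) ∣ x ↔ toZModPow 1 x = 0 := by
  rw [← RingHom.mem_ker, ker_toZModPow, pow_one, Ideal.mem_span_singleton]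

theorem norm_lt_one_of_sq_sub_mul_sq_add_sq_eq_zero {n : ℤ}
    (hn : n = -1 ∨ n = -2 ∨ n = 3 ∨ n = 6) {x y z : ℤ_[2]}
    (h : x ^ 2 - n * y ^ 2 + z ^ 2 = 0) : ‖x‖ < 1 ∧ ‖y‖ < 1 ∧ ‖z‖ < 1 := by
  have hmod := congrArg (toZModPow 3) h
  simp only [map_add, map_sub, map_mul, map_pow, map_intCast, map_zero] at hmod
  simp only [norm_lt_one_iff_dvd, dvd_iff_toZModPow_one_eq_zero,
    ← cast_toZModPow 1 3 (by norm_num)]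
  exact ZMod.cast_eq_zero_of_sq_sub_mul_sq_add_sq_eq_zero hn hmod

end PadicInt

theorem Padic.eq_zero_of_sq_sub_mul_sq_add_sq_eq_zero {n : ℤ}
    (hn : n = -1 ∨ n = -2 ∨ n = 3 ∨ n = 6) {x y z : ℚ_[2]}
    (h : x ^ 2 - n * y ^ 2 + z ^ 2 = 0) : x = 0 ∧ y = 0 ∧ z = 0 := by
  classical
  -- Dividing by the coordinate `t` of largest norm gives an integral zero with a coordinate `1`.
  obtain ⟨t, ht, hmax⟩ := Finset.exists_max_image {x, y, z} (‖·‖) (by simp)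
  by_cases ht0 : t = 0
  · subst ht0
    simpa using hmax
  have hint {w : ℚ_[2]} (hw : w ∈ ({x, y, z} : Finset ℚ_[2])) : ‖w / t‖ ≤ 1 := by
    rw [norm_div]; exact div_le_one_of_le₀ (hmax w hw) (norm_nonneg t)
  set X : ℤ_[2] := ⟨x / t, hint (by simp)⟩
  set Y : ℤ_[2] := ⟨y / t, hint (by simp)⟩
  set Z : ℤ_[2] := ⟨z / t, hint (by simp)⟩
  have hXYZ : X ^ 2 - n * Y ^ 2 + Z ^ 2 = 0 := by
    rw [← PadicInt.coe_eq_zero]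
    push_cast
    change (x / t) ^ 2 - n * (y / t) ^ 2 + (z / t) ^ 2 = 0
    linear_combination h / t ^ 2
  obtain ⟨hX, hY, hZ⟩ := PadicInt.norm_lt_one_of_sq_sub_mul_sq_add_sq_eq_zero hn hXYZ
  simp only [Finset.mem_insert, Finset.mem_singleton] at ht
  rcases ht with rfl | rfl | rfl
  · exact absurd hX (by simp [X, ht0])
  · exact absurd hY (by simp [Y, ht0])
  · exact absurd hZ (by simp [Z, ht0])

theorem stmt5 (n : ℤ) :
    ((n = 1 ∨ n = 2 ∨ n = -3 ∨ n = -6) →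
      ∃ a b : ℚ_[2], a ^ 2 - (n : ℚ_[2]) * b ^ 2 = -1) ∧
    ((n = -1 ∨ n = -2 ∨ n = 3 ∨ n = 6) →
      ¬ ∃ a b : ℚ_[2], a ^ 2 - (n : ℚ_[2]) * b ^ 2 = -1) := by
  refine ⟨fun hn => ?_, fun hn ⟨a, b, hab⟩ => ?_⟩
  · obtain ⟨s, hs⟩ := PadicInt.isSquare_of_eight_dvd_sub_one (a := -7) ⟨-1, by norm_num⟩
    have hs' : (s : ℚ_[2]) ^ 2 = -7 := by
      rw [sq, ← PadicInt.coe_mul, ← hs]; norm_cast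
    rcases hn with rfl | rfl | rfl | rfl
    · exact ⟨0, 1, by norm_num⟩
    · exact ⟨1, 1, by norm_num⟩
    · exact ⟨s / 2, 1 / 2, by push_cast; linear_combination hs' / 4⟩
    · exact ⟨s, 1, by push_cast; linear_combination hs'⟩
  · have := Padic.eq_zero_of_sq_sub_mul_sq_add_sq_eq_zero hn (x := a) (y := b) (z := 1)
      (by linear_combination hab)
    exact one_ne_zero this.2.2
end

section
/- Let O be an imaginary quadratic order (a ring of integers of an imaginary quadratic field), and consider the order Ō[i] in the quaternion algebra H = K̄[i] (where i^2 = -1 and αi = iᾱ for α in O). Then the reduced discriminant of Ō[i] equals the discriminant Δ of O. More precisely, the trace dual of Ō[i] with respect to the reduced trace is Ā[i], where A is the trace dual of O in K. -/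
/-!
Write `tr x = x + x̄`. For `α = [[u, -v̄], [v, ū]]` and `β = [[a, -b̄], [b, ā]]` the reduced
trace of `αβ` is `tr (u a) - tr (v b̄)`, so taking `b = 0` or `a = 0` separates the conditions
on `u` and on `v`: the dual of `Ō[i]` is `Ā[i]`. On the basis `1, ω̄, i, iω̄` the Gram matrix is
block diagonal, its two `2 × 2` blocks have determinants `(ω - ω̄)²` and `-(ω - ω̄)²`, and
`Δ = (ω - ω̄)²` is the discriminant of the basis `1, ω` of `O`.
-/

open Matrix

/-- The quaternion-type matrix `[[u, -v̄],[v, ū]]`; the quaternion algebra `K̄[i]`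
consists of all of these, and the order `Ō[i]` of those with `u, v` integral. -/
def qmat {K : Type*} [Field K] (σ : K → K) (u v : K) : Matrix (Fin 2) (Fin 2) K :=
  !![u, -(σ v); v, σ u]

theorem det_fin_four_blockDiagonal {R : Type*} [CommRing R] (a b c d e f g h : R) :
    det !![a, b, 0, 0; c, d, 0, 0; 0, 0, e, f; 0, 0, g, h] = (a * d - b * c) * (e * h - f * g) := by
  have hblocks : !![a, b, 0, 0; c, d, 0, 0; 0, 0, e, f; 0, 0, g, h] =
      reindex finSumFinEquiv finSumFinEquiv (fromBlocks !![a, b; c, d] 0 0 !![e, f; g, h]) := by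
    ext i j
    fin_cases i <;> fin_cases j <;> rfl
  rw [hblocks, det_reindex_self, det_fromBlocks_zero₂₁, det_fin_two_of, det_fin_two_of]

section QuaternionMatrix

variable {K F : Type*} [Field K] [FunLike F K K] [RingHomClass F K K]

theorem trace_qmat_mul_qmat (σ : F) (hσ : ∀ x, σ (σ x) = x) (u v a b : K) :
    (qmat σ u v * qmat σ a b).trace = (u * a + σ (u * a)) - (v * σ b + σ (v * σ b)) := by
  simp only [qmat, trace_fin_two, mul_apply, Fin.sum_univ_two, of_apply, cons_val',
    cons_val_zero, cons_val_one, empty_val', cons_val_fin_one, map_mul, hσ]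
  ring

theorem forall_trace_qmat_mul_qmat_eq_intCast_iff (σ : F) (hσ : ∀ x, σ (σ x) = x)
    (O : Set K) (hO₀ : 0 ∈ O) (hOσ : ∀ w ∈ O, σ w ∈ O) (u v : K) :
    (∀ a b, a ∈ O → b ∈ O → ∃ n : ℤ, (qmat σ u v * qmat σ a b).trace = n) ↔
      (∀ w ∈ O, ∃ n : ℤ, u * w + σ (u * w) = n) ∧ (∀ w ∈ O, ∃ n : ℤ, v * w + σ (v * w) = n) := by
  simp only [trace_qmat_mul_qmat σ hσ]
  constructor
  · intro H
    refine ⟨fun w hw => ?_, fun w hw => ?_⟩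
    · obtain ⟨n, hn⟩ := H w 0 hw hO₀
      exact ⟨n, by simpa using hn⟩
    · obtain ⟨n, hn⟩ := H 0 (σ w) hO₀ (hOσ w hw)
      simp only [hσ, mul_zero, map_zero, zero_add, zero_sub] at hn
      exact ⟨-n, by rw [Int.cast_neg, ← hn, neg_neg]⟩
  · rintro ⟨hu, hv⟩ a b ha hb
    obtain ⟨m, hm⟩ := hu a ha
    obtain ⟨n, hn⟩ := hv (σ b) (hOσ b hb)
    exact ⟨m - n, by push_cast; rw [hm, hn]⟩

theorem det_traceGram_qmat (σ : F) (ω : K) :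
    det (of fun i j : Fin 4 =>
        (![qmat σ 1 0, qmat σ ω 0, qmat σ 0 1, qmat σ 0 ω] i *
         ![qmat σ 1 0, qmat σ ω 0, qmat σ 0 1, qmat σ 0 ω] j).trace) = -((ω - σ ω) ^ 2) ^ 2 := by
  have hgram : (of fun i j : Fin 4 =>
        (![qmat σ 1 0, qmat σ ω 0, qmat σ 0 1, qmat σ 0 ω] i *
         ![qmat σ 1 0, qmat σ ω 0, qmat σ 0 1, qmat σ 0 ω] j).trace) =
      !![2, ω + σ ω, 0, 0; ω + σ ω, ω * ω + σ ω * σ ω, 0, 0;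
         0, 0, -2, -(ω + σ ω); 0, 0, -(ω + σ ω), -(2 * (ω * σ ω))] := by
    ext i j
    fin_cases i <;> fin_cases j <;>
      simp only [qmat, trace_fin_two, mul_apply, Fin.sum_univ_two, of_apply, cons_val', cons_val,
        cons_val_zero, cons_val_one, cons_val_fin_one, Fin.zero_eta, Fin.mk_one, Fin.reduceFinMk,
        map_zero, map_one] <;> ring
  rw [hgram, det_fin_four_blockDiagonal]
  ring

end QuaternionMatrix

section QuadraticField

open NumberField

theorem algebraMap_trace_eq_add_of_finrank_eq_two {F K : Type*} [Field F] [Field K] [Algebra F K]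
    [FiniteDimensional F K] [IsGalois F K] (hdeg : Module.finrank F K = 2)
    (σ : K ≃ₐ[F] K) (hσ : σ ≠ 1) (x : K) :
    algebraMap F K (Algebra.trace F K x) = x + σ x := by
  classical
  have huniv : (Finset.univ : Finset (K ≃ₐ[F] K)) = {1, σ} := by
    refine (Finset.eq_univ_of_card _ ?_).symm
    rw [Finset.card_pair hσ.symm, ← hdeg, ← IsGalois.card_aut_eq_finrank, Nat.card_eq_fintype_card]
  rw [trace_eq_sum_automorphisms, huniv, Finset.sum_pair hσ.symm]
  rfl

theorem top_le_span_one_generator {K : Type*} [Field K] (ω : 𝓞 K)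
    (hbasis : ∀ x : 𝓞 K, ∃ a b : ℤ, (x : K) = a + b * ω) :
    ⊤ ≤ Submodule.span ℤ (Set.range ![1, ω]) := by
  rintro x -
  obtain ⟨a, b, hx⟩ := hbasis x
  rw [Matrix.range_cons_cons_empty, Submodule.mem_span_pair]
  exact ⟨a, b, RingOfIntegers.ext (by simp [hx])⟩

variable {K : Type*} [Field K] [NumberField K]

theorem intCast_trace_ringOfIntegers (σ : K ≃ₐ[ℚ] K)
    (htr : ∀ x : K, algebraMap ℚ K (Algebra.trace ℚ K x) = x + σ x) (x : 𝓞 K) :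
    ((Algebra.trace ℤ (𝓞 K) x : ℤ) : K) = x + σ x := by
  rw [← htr, ← Algebra.coe_trace_int, map_intCast]

theorem intCast_discr_eq_of_basis (σ : K ≃ₐ[ℚ] K)
    (htr : ∀ x : K, algebraMap ℚ K (Algebra.trace ℚ K x) = x + σ x)
    (b : Module.Basis (Fin 2) ℤ (𝓞 K)) :
    (discr K : K) = ((b 0 : K) * σ (b 1) - b 1 * σ (b 0)) ^ 2 := by
  rw [← discr_eq_discr K b, Algebra.discr_def, det_fin_two]
  push_cast
  simp only [Algebra.traceMatrix_apply, Algebra.traceForm_apply,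
    intCast_trace_ringOfIntegers σ htr, RingOfIntegers.coe_eq_algebraMap, map_mul]
  ring

theorem intCast_discr_eq_sub_conj_sq (hdeg : Module.finrank ℚ K = 2) (σ : K ≃ₐ[ℚ] K)
    (htr : ∀ x : K, algebraMap ℚ K (Algebra.trace ℚ K x) = x + σ x) (ω : 𝓞 K)
    (hbasis : ∀ x : 𝓞 K, ∃ a b : ℤ, (x : K) = a + b * ω) :
    (discr K : K) = ((ω : K) - σ ω) ^ 2 := by
  let b := basisOfTopLeSpanOfCardEqFinrank _ (top_le_span_one_generator ω hbasis)
    (by rw [RingOfIntegers.rank, hdeg, Fintype.card_fin])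
  rw [intCast_discr_eq_of_basis σ htr b, coe_basisOfTopLeSpanOfCardEqFinrank]
  simp only [Fin.isValue, cons_val_zero, cons_val_one, cons_val_fin_one, map_one]
  ring

end QuadraticField

theorem stmt8_general (K : Type*) [Field K] [NumberField K]
    (hdeg : Module.finrank ℚ K = 2)
    (σ : K ≃ₐ[ℚ] K) (hσ : ∀ x, σ (σ x) = x) (hσne : σ ≠ (AlgEquiv.refl : K ≃ₐ[ℚ] K))
    (ω : K) (hω : IsIntegral ℤ ω)
    (hbasis : ∀ x : K, IsIntegral ℤ x ↔ ∃ a b : ℤ, x = (a : K) + (b : K) * ω) :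
    (∀ u v : K,
      ((∀ a b : K, IsIntegral ℤ a → IsIntegral ℤ b →
          ∃ n : ℤ, (qmat (⇑σ) u v * qmat (⇑σ) a b).trace = (n : K)) ↔
        ((∀ w : K, IsIntegral ℤ w → ∃ n : ℤ, u * w + σ (u * w) = (n : K)) ∧
         (∀ w : K, IsIntegral ℤ w → ∃ n : ℤ, v * w + σ (v * w) = (n : K))))) ∧
    Matrix.det (Matrix.of fun i j : Fin 4 =>
        (![qmat (⇑σ) 1 0, qmat (⇑σ) ω 0, qmat (⇑σ) 0 1, qmat (⇑σ) 0 ω] i *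
         ![qmat (⇑σ) 1 0, qmat (⇑σ) ω 0, qmat (⇑σ) 0 1, qmat (⇑σ) 0 ω] j).trace)
      = -((NumberField.discr K : K)) ^ 2 := by
  refine ⟨forall_trace_qmat_mul_qmat_eq_intCast_iff σ hσ {x | IsIntegral ℤ x} isIntegral_zero
    (fun w hw => hw.map σ), ?_⟩
  have : Algebra.IsQuadraticExtension ℚ K := ⟨hdeg⟩
  have htr := algebraMap_trace_eq_add_of_finrank_eq_two hdeg σ hσne
  rw [det_traceGram_qmat, intCast_discr_eq_sub_conj_sq hdeg σ htr ⟨ω, hω⟩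
    fun x => (hbasis x).1 x.isIntegral_coe]
  rfl

theorem stmt8 (K : Type*) [Field K] [NumberField K]
    (hdeg : Module.finrank ℚ K = 2) (himag : IsEmpty (K →+* ℝ))
    (σ : K ≃ₐ[ℚ] K) (hσ : ∀ x, σ (σ x) = x) (hσne : σ ≠ (AlgEquiv.refl : K ≃ₐ[ℚ] K))
    (ω : K) (hω : IsIntegral ℤ ω)
    (hbasis : ∀ x : K, IsIntegral ℤ x ↔ ∃ a b : ℤ, x = (a : K) + (b : K) * ω) :
    (∀ u v : K,
      ((∀ a b : K, IsIntegral ℤ a → IsIntegral ℤ b →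
          ∃ n : ℤ, (qmat (⇑σ) u v * qmat (⇑σ) a b).trace = (n : K)) ↔
        ((∀ w : K, IsIntegral ℤ w → ∃ n : ℤ, u * w + σ (u * w) = (n : K)) ∧
         (∀ w : K, IsIntegral ℤ w → ∃ n : ℤ, v * w + σ (v * w) = (n : K))))) ∧
    Matrix.det (Matrix.of fun i j : Fin 4 =>
        (![qmat (⇑σ) 1 0, qmat (⇑σ) ω 0, qmat (⇑σ) 0 1, qmat (⇑σ) 0 ω] i *
         ![qmat (⇑σ) 1 0, qmat (⇑σ) ω 0, qmat (⇑σ) 0 1, qmat (⇑σ) 0 ω] j).trace)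
      = -((NumberField.discr K : K)) ^ 2 :=
  stmt8_general K hdeg σ hσ hσne ω hω hbasis
end

section
/- Let O be the maximal order of an imaginary quadratic field, L = [[k, α],[ᾱ, ℓ]] a positive definite unimodular Hermitian matrix in M_2(O) (so k, ℓ positive integers, kℓ − N(α) = 1), and S = [[k, α],[0,1]]. Then S* S = (det S) · L, and the set {P ∈ M_2(O) : L P = P'} is equal to M_2(O) ∩ S^{-1} · K̄[i], where K̄[i] = {[[u, -v̄],[v, ū]] : u, v ∈ K} inside M_2(K). -/
/-- The involution `P ↦ P'` on `M₂(K)`: `[[a,b],[c,d]] ↦ [[d̄,-c̄],[-b̄,ā]]`. -/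
def pprime {K : Type*} [Field K] (σ : K → K) (P : Matrix (Fin 2) (Fin 2) K) :
    Matrix (Fin 2) (Fin 2) K :=
  !![σ (P 1 1), -(σ (P 1 0)); -(σ (P 0 1)), σ (P 0 0)]

/-- Conjugate transpose of a `2×2` matrix with respect to the conjugation `σ`. -/
def cstar {K : Type*} [Field K] (σ : K → K) (P : Matrix (Fin 2) (Fin 2) K) :
    Matrix (Fin 2) (Fin 2) K :=
  !![σ (P 0 0), σ (P 1 0); σ (P 0 1), σ (P 1 1)]

/- STATEMENT 11.  Let `O` be the maximal order of an imaginary quadratic field `K` with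
conjugation `σ`, let `L = [[k, α],[ᾱ, ℓ]]` be a positive definite unimodular Hermitian
matrix in `M₂(O)` (`k, ℓ` positive integers, `α ∈ O`, `kℓ - N(α) = 1`) and let
`S = [[k, α],[0, 1]]`.  Then `S* S = (det S) · L`, and
`{P ∈ M₂(O) : L P = P'} = M₂(O) ∩ S⁻¹ · K̄[i]`, i.e. an integral `P` satisfies
`L P = P'` iff `S P ∈ K̄[i]`. -/
theorem stmt11 (K : Type*) [Field K] [NumberField K]
    (hdeg : Module.finrank ℚ K = 2) (himag : IsEmpty (K →+* ℝ))
    (σ : K ≃ₐ[ℚ] K) (hσ : ∀ x, σ (σ x) = x) (hσne : σ ≠ (AlgEquiv.refl : K ≃ₐ[ℚ] K))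
    (k l : ℤ) (hk : 0 < k) (hl : 0 < l) (α : K) (hα : IsIntegral ℤ α)
    (huni : (k : K) * (l : K) - α * σ α = 1)
    (L S : Matrix (Fin 2) (Fin 2) K)
    (hL : L = !![(k : K), α; σ α, (l : K)])
    (hS : S = !![(k : K), α; 0, 1]) :
    cstar (⇑σ) S * S = S.det • L ∧
    ∀ P : Matrix (Fin 2) (Fin 2) K,
      ((∀ i j, IsIntegral ℤ (P i j)) ∧ L * P = pprime (⇑σ) P) ↔
      ((∀ i j, IsIntegral ℤ (P i j)) ∧ ∃ u v : K, S * P = qmat (⇑σ) u v) := by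
  subst hL hS
  have hk0 : (k : K) ≠ 0 := by
    exact_mod_cast Int.cast_ne_zero.mpr hk.ne'
  have hσk : σ ((k : K)) = (k : K) := map_intCast σ k
  have hσl : σ ((l : K)) = (l : K) := map_intCast σ l
  constructor
  · ext i j
    fin_cases i <;> fin_cases j <;>
      simp [cstar, Matrix.mul_apply, Fin.sum_univ_two, Matrix.det_fin_two_of, hσk,
        Matrix.smul_apply, smul_eq_mul]
    · ring
    · linear_combination -huni
  · intro P
    constructor
    · rintro ⟨hint, h⟩
      refine ⟨hint, (k : K) * P 0 0 + α * P 1 0, P 1 0, ?_⟩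
      have e1 := congrFun (congrFun h 0) 0
      have e2 := congrFun (congrFun h 0) 1
      simp [Matrix.mul_apply, Fin.sum_univ_two, pprime] at e1 e2
      ext i j
      fin_cases i <;> fin_cases j <;>
        simp [qmat, Matrix.mul_apply, Fin.sum_univ_two]
      · exact e2
      · have := congrArg σ e1
        rw [hσ] at this
        rw [← this, map_add, map_mul, map_mul, hσk]
    · rintro ⟨hint, u, v, h⟩
      refine ⟨hint, ?_⟩
      have e1 := congrFun (congrFun h 0) 0
      have e2 := congrFun (congrFun h 0) 1
      have e3 := congrFun (congrFun h 1) 0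
      have e4 := congrFun (congrFun h 1) 1
      simp [Matrix.mul_apply, Fin.sum_univ_two, qmat] at e1 e2 e3 e4
      -- e1 : k * P00 + α * P10 = u, e2 : k * P01 + α * P11 = -σ v,
      -- e3 : P10 = v, e4 : P11 = σ u
      subst e3
      have hds : σ (P 1 1) = (k : K) * P 0 0 + α * P 1 0 := by
        rw [e4, hσ, ← e1]
      have hd2 : P 1 1 = (k : K) * σ (P 0 0) + σ α * σ (P 1 0) := by
        have := congrArg σ hds
        rw [hσ, map_add, map_mul, map_mul, hσk] at this
        exact this
      have h2s : (k : K) * σ (P 0 1) + σ α * σ (P 1 1) = -(P 1 0) := by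
        have := congrArg σ e2
        rw [map_add, map_mul, map_mul, hσk, map_neg, hσ] at this
        exact this
      ext i j
      fin_cases i <;> fin_cases j <;>
        simp [pprime, Matrix.mul_apply, Fin.sum_univ_two]
      · rw [hds]
      · exact e2
      · -- σ α * P00 + l * P10 = -σ (P01)
        have key : (k : K) * (σ α * P 0 0 + (l : K) * P 1 0) =
            (k : K) * (-σ (P 0 1)) := by
          linear_combination h2s - σ α * hds + (P 1 0) * huni
        exact mul_left_cancel₀ hk0 key
      · -- σ α * P01 + l * P11 = σ (P00)
        have key : (k : K) * (σ α * P 0 1 + (l : K) * P 1 1) =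
            (k : K) * σ (P 0 0) := by
          linear_combination σ α * e2 + hd2 + (P 1 1) * huni
        exact mul_left_cancel₀ hk0 key
end

section
/- Let O be the maximal order of an imaginary quadratic field K and L = [[k, α],[ᾱ, ℓ]] a positive definite unimodular Hermitian matrix in M_2(O). Then the right Ō[i]-module Hom(I, L) = {P ∈ M_2(O) : LP = P'} is isomorphic, as a right Ō[i]-module, to the right ideal of Ō[i] generated by k and α + i; in particular it is a projective rank-1 right Ō[i]-module. -/
/- STATEMENT 12.  Let `O` be the maximal order of an imaginary quadratic field `K` and
`L = [[k, α],[ᾱ, ℓ]]` a positive definite unimodular Hermitian matrix in `M₂(O)`.  The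
right `Ō[i]`-module `Hom(I, L) = {P ∈ M₂(O) : L P = P'}` is isomorphic, as a right
`Ō[i]`-module, to the right ideal of `Ō[i]` generated by `k` and `α + i`: the
isomorphism is `P ↦ S P` (left multiplication by `S = [[k, α],[0,1]]`, which is
injective and commutes with the right action), and it maps `Hom(I, L)` exactly onto
`{k X + (α + i) Y : X, Y ∈ Ō[i]}`; in particular `Hom(I, L)` is a projective rank-1
right `Ō[i]`-module. -/
theorem stmt12 (K : Type*) [Field K] [NumberField K]
    (hdeg : Module.finrank ℚ K = 2) (himag : IsEmpty (K →+* ℝ))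
    (σ : K ≃ₐ[ℚ] K) (hσ : ∀ x, σ (σ x) = x) (hσne : σ ≠ (AlgEquiv.refl : K ≃ₐ[ℚ] K))
    (k l : ℤ) (hk : 0 < k) (hl : 0 < l) (α : K) (hα : IsIntegral ℤ α)
    (huni : (k : K) * (l : K) - α * σ α = 1)
    (L S : Matrix (Fin 2) (Fin 2) K)
    (hL : L = !![(k : K), α; σ α, (l : K)])
    (hS : S = !![(k : K), α; 0, 1]) :
    Function.Injective (fun P : Matrix (Fin 2) (Fin 2) K => S * P) ∧
    ∀ Q : Matrix (Fin 2) (Fin 2) K,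
      (∃ P : Matrix (Fin 2) (Fin 2) K,
        (∀ i j, IsIntegral ℤ (P i j)) ∧ L * P = pprime (⇑σ) P ∧ Q = S * P) ↔
      (∃ X Y : Matrix (Fin 2) (Fin 2) K,
        (∃ u v : K, IsIntegral ℤ u ∧ IsIntegral ℤ v ∧ X = qmat (⇑σ) u v) ∧
        (∃ u v : K, IsIntegral ℤ u ∧ IsIntegral ℤ v ∧ Y = qmat (⇑σ) u v) ∧
        Q = qmat (⇑σ) (k : K) 0 * X + qmat (⇑σ) α 1 * Y) := by
  have hk0 : (k : K) ≠ 0 := by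
    exact_mod_cast hk.ne'
  have hσk : σ (k : K) = (k : K) := map_intCast (σ : K →+* K) k
  have hσl : σ (l : K) = (l : K) := map_intCast (σ : K →+* K) l
  have hσint : ∀ z : K, IsIntegral ℤ z → IsIntegral ℤ (σ z) := fun z hz =>
    hz.map (RingHom.toIntAlgHom (σ : K →+* K))
  have hkint : IsIntegral ℤ ((k : ℤ) : K) := by
    simpa using (isIntegral_algebraMap (R := ℤ) (A := K) (x := k))
  have hlint : IsIntegral ℤ ((l : ℤ) : K) := by
    simpa using (isIntegral_algebraMap (R := ℤ) (A := K) (x := l))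
  subst hL hS
  constructor
  · -- injectivity: S has det k ≠ 0
    have hdet : IsUnit (!![(k : K), α; 0, 1]).det := by
      rw [Matrix.det_fin_two_of]
      simpa using isUnit_iff_ne_zero.2 hk0
    haveI := Matrix.invertibleOfIsUnitDet _ hdet
    exact Matrix.mul_right_injective_of_invertible _
  · intro Q
    constructor
    · rintro ⟨P, hint, hLP, rfl⟩
      have e00 := congrFun (congrFun hLP 0) 0
      have e01 := congrFun (congrFun hLP 0) 1
      simp [pprime, Matrix.mul_apply, Fin.sum_univ_two] at e00 e01
      have e00σ : (k : K) * σ (P 0 0) + σ α * σ (P 1 0) = P 1 1 := by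
        have := congrArg σ e00
        simpa [map_add, map_mul, hσk, hσ] using this
      refine ⟨qmat (⇑σ) (P 0 0) 0, qmat (⇑σ) (P 1 0) 0,
        ⟨P 0 0, 0, hint 0 0, isIntegral_zero, rfl⟩,
        ⟨P 1 0, 0, hint 1 0, isIntegral_zero, rfl⟩, ?_⟩
      ext i j
      fin_cases i <;> fin_cases j <;>
          simp [qmat, Matrix.mul_apply, Fin.sum_univ_two, hσk] <;>
        first
          | ring1
          | linear_combination e01
          | linear_combination -e01
          | linear_combination e00σ
          | linear_combination -e00σ
    · rintro ⟨X, Y, ⟨u, v, hu, hv, rfl⟩, ⟨u', v', hu', hv', rfl⟩, rfl⟩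
      refine ⟨!![u - α * v - (l : K) * v', -(σ v + α * σ u + (l : K) * σ u');
                 (k : K) * v + u' + σ α * v', (k : K) * σ u + σ α * σ u' - σ v'],
        ?_, ?_, ?_⟩
      · have h1 : IsIntegral ℤ (u - α * v - (l : K) * v') :=
          (hu.sub (hα.mul hv)).sub (hlint.mul hv')
        have h2 : IsIntegral ℤ (-(σ v + α * σ u + (l : K) * σ u')) :=
          (((hσint v hv).add (hα.mul (hσint u hu))).add (hlint.mul (hσint u' hu'))).neg
        have h3 : IsIntegral ℤ ((k : K) * v + u' + σ α * v') :=
          ((hkint.mul hv).add hu').add ((hσint α hα).mul hv')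
        have h4 : IsIntegral ℤ ((k : K) * σ u + σ α * σ u' - σ v') :=
          ((hkint.mul (hσint u hu)).add ((hσint α hα).mul (hσint u' hu'))).sub
            (hσint v' hv')
        intro i j
        fin_cases i <;> fin_cases j <;>
          simp only [Matrix.cons_val', Matrix.cons_val_zero, Matrix.cons_val_one,
            Matrix.head_cons, Matrix.empty_val', Matrix.cons_val_fin_one,
            Matrix.head_fin_const, Fin.isValue, Fin.zero_eta, Fin.mk_one] <;>
          first | exact h1 | exact h2 | exact h3 | exact h4
      · ext i j
        fin_cases i <;> fin_cases j <;>
            simp [pprime, qmat, Matrix.mul_apply, Fin.sum_univ_two, map_add, map_mul,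
              map_sub, map_neg, hσk, hσl, hσ] <;>
          first
            | ring1
            | linear_combination v' * huni
            | linear_combination -v' * huni
            | linear_combination σ u' * huni
            | linear_combination -σ u' * huni
            | linear_combination v * huni
            | linear_combination -v * huni
            | linear_combination σ u * huni
            | linear_combination -σ u * huni
      · ext i j
        fin_cases i <;> fin_cases j <;>
            simp [qmat, Matrix.mul_apply, Fin.sum_univ_two, hσk] <;>
          first
            | ring1
            | linear_combination v' * huni
            | linear_combination -v' * huni
            | linear_combination σ u' * huni
            | linear_combination -σ u' * huni
end

section
/- Let L and M be positive definite Hermitian matrices in M_2(O) for O an imaginary quadratic order, and suppose P ∈ M_2(O) satisfies M P = P' L, where P' sends [[a,b],[c,d]] to [[d̄,-c̄],[-b̄,ā]]. Then P* M P = (conj(det P)) L, and det P is a non-negative rational integer. -/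
/-!
Since `P* P' = σ(det P) · 1` for every `2 × 2` matrix, the relation `M P = P' L` gives
`P* M P = P* P' L = σ(det P) L`. The left side is positive semidefinite and `L` is positive
definite, so `σ(det P)` is a non-negative real number under `φ`; in particular
`σ(det P) = det P`. The fixed field of the nontrivial automorphism of a quadratic field is `ℚ`,
so `det P` is a non-negative rational algebraic integer, i.e. a natural number.
-/

open scoped ComplexOrder

open Matrix

section Involution

variable {K F : Type*} [Field K] [FunLike F K K] [RingHomClass F K K]

theorem cstar_mul_pprime (σ : F) (P : Matrix (Fin 2) (Fin 2) K) :
    cstar σ P * pprime σ P = σ P.det • (1 : Matrix (Fin 2) (Fin 2) K) := by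
  ext i j
  fin_cases i <;> fin_cases j <;>
    simp [cstar, pprime, mul_apply, det_fin_two, one_apply] <;> ring

theorem cstar_mul_mul_eq_smul_of_mul_eq_pprime_mul (σ : F)
    {L M P : Matrix (Fin 2) (Fin 2) K} (h : M * P = pprime σ P * L) :
    cstar σ P * M * P = σ P.det • L := by
  rw [Matrix.mul_assoc, h, ← Matrix.mul_assoc, cstar_mul_pprime, smul_mul, one_mul]

theorem map_cstar {σ : K → K} {φ : K →+* ℂ} (hφσ : ∀ x, φ (σ x) = starRingEnd ℂ (φ x))
    (P : Matrix (Fin 2) (Fin 2) K) : (cstar σ P).map φ = (P.map φ)ᴴ := by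
  ext i j
  fin_cases i <;> fin_cases j <;> simp [cstar, hφσ]

end Involution

theorem Matrix.nonneg_of_conjTranspose_mul_mul_eq_smul {𝕜 m n : Type*} [RCLike 𝕜]
    [Fintype m] [Fintype n] [Nonempty m] {M : Matrix n n 𝕜} {L : Matrix m m 𝕜}
    {Q : Matrix n m 𝕜} {c : 𝕜} (hM : M.PosSemidef) (hL : L.PosDef) (h : Qᴴ * M * Q = c • L) :
    0 ≤ c := by
  set v : m → 𝕜 := fun _ => 1
  have hv : v ≠ 0 := Function.ne_iff.2 ⟨Classical.arbitrary m, one_ne_zero⟩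
  have hLv : 0 < star v ⬝ᵥ (L *ᵥ v) := hL.dotProduct_mulVec_pos hv
  have hcLv : 0 ≤ c * (star v ⬝ᵥ (L *ᵥ v)) := by
    simpa only [h, smul_mulVec, dotProduct_smul, smul_eq_mul] using
      (hM.conjTranspose_mul_mul_same Q).dotProduct_mulVec_nonneg v
  simpa [hLv.ne'] using mul_nonneg hcLv (RCLike.inv_pos.2 hLv).le

theorem exists_algebraMap_eq_of_fixed {F K : Type*} [Field F] [Field K] [Algebra F K]
    (hdeg : Module.finrank F K = 2) {σ : K ≃ₐ[F] K} (hσ : σ ≠ AlgEquiv.refl) {x : K}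
    (hx : σ x = x) : ∃ a : F, algebraMap F K a = x := by
  have : FiniteDimensional F K := Module.finite_of_finrank_eq_succ hdeg
  set f : K →ₗ[F] K := σ.toLinearMap - LinearMap.id
  have hspan_le : Submodule.span F {1} ≤ LinearMap.ker f := by
    simp [Submodule.span_le, f]
  have hker_ne_top : LinearMap.ker f ≠ ⊤ := fun htop ↦ hσ <| AlgEquiv.ext fun y ↦ by
    simpa [f, sub_eq_zero] using LinearMap.congr_fun (LinearMap.ker_eq_top.1 htop) y
  have hker_finrank : Module.finrank F (LinearMap.ker f) ≤ 1 := by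
    have := Submodule.finrank_lt hker_ne_top
    omega
  have hspan_eq : Submodule.span F {1} = LinearMap.ker f :=
    Submodule.eq_of_le_of_finrank_le hspan_le (by rwa [finrank_span_singleton one_ne_zero])
  have hx_mem : x ∈ Submodule.span F {(1 : K)} := by
    simp [hspan_eq, f, hx]
  obtain ⟨a, rfl⟩ := Submodule.mem_span_singleton.1 hx_mem
  exact ⟨a, Algebra.algebraMap_eq_smul_one a⟩

theorem exists_nat_eq_of_fixed_of_nonneg {K : Type*} [Field K] [CharZero K]
    (hdeg : Module.finrank ℚ K = 2) {σ : K ≃ₐ[ℚ] K} (hσ : σ ≠ AlgEquiv.refl) {φ : K →+* ℂ}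
    {x : K} (hint : IsIntegral ℤ x) (hfix : σ x = x) (hpos : 0 ≤ φ x) : ∃ n : ℕ, x = n := by
  obtain ⟨q, rfl⟩ := exists_algebraMap_eq_of_fixed hdeg hσ hfix
  obtain ⟨m, rfl⟩ : ∃ m : ℤ, algebraMap ℤ ℚ m = q :=
    IsIntegrallyClosed.isIntegral_iff.1 <|
      (isIntegral_algebraMap_iff (algebraMap ℚ K).injective).1 hint
  have hm : (0 : ℂ) ≤ m := by simpa using hpos
  lift m to ℕ using by exact_mod_cast hm
  exact ⟨m, by simp⟩

theorem stmt13_general (K : Type*) [Field K] [NumberField K]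
    (hdeg : Module.finrank ℚ K = 2)
    (σ : K ≃ₐ[ℚ] K) (hσne : σ ≠ (AlgEquiv.refl : K ≃ₐ[ℚ] K))
    (φ : K →+* ℂ) (hφσ : ∀ x, φ (σ x) = starRingEnd ℂ (φ x))
    (L M P : Matrix (Fin 2) (Fin 2) K)
    (hPint : ∀ i j, IsIntegral ℤ (P i j))
    (hLpd : (L.map ⇑φ).PosDef) (hMpd : (M.map ⇑φ).PosDef)
    (h : M * P = pprime (⇑σ) P * L) :
    cstar (⇑σ) P * M * P = σ P.det • L ∧ ∃ n : ℕ, P.det = (n : K) := by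
  have hPMP := cstar_mul_mul_eq_smul_of_mul_eq_pprime_mul σ h
  refine ⟨hPMP, ?_⟩
  have hc : 0 ≤ φ (σ P.det) := by
    refine nonneg_of_conjTranspose_mul_mul_eq_smul hMpd.posSemidef hLpd (Q := P.map φ) ?_
    rw [← map_cstar hφσ, ← Matrix.map_mul, ← Matrix.map_mul, hPMP,
      Matrix.map_smul' _ _ _ (map_mul φ)]
  have hφ_det : φ (σ P.det) = φ P.det := by
    rw [← Complex.conj_eq_iff_im.2 (Complex.nonneg_iff.1 hc).2.symm, hφσ, Complex.conj_conj]
  have hdet_int : IsIntegral ℤ P.det := by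
    rw [det_fin_two]
    exact ((hPint 0 0).mul (hPint 1 1)).sub ((hPint 0 1).mul (hPint 1 0))
  exact exists_nat_eq_of_fixed_of_nonneg hdeg hσne hdet_int (φ.injective hφ_det) (hφ_det ▸ hc)

theorem stmt13 (K : Type*) [Field K] [NumberField K]
    (hdeg : Module.finrank ℚ K = 2) (himag : IsEmpty (K →+* ℝ))
    (σ : K ≃ₐ[ℚ] K) (hσ : ∀ x, σ (σ x) = x) (hσne : σ ≠ (AlgEquiv.refl : K ≃ₐ[ℚ] K))
    (φ : K →+* ℂ) (hφσ : ∀ x, φ (σ x) = starRingEnd ℂ (φ x))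
    (L M P : Matrix (Fin 2) (Fin 2) K)
    (hLint : ∀ i j, IsIntegral ℤ (L i j)) (hMint : ∀ i j, IsIntegral ℤ (M i j))
    (hPint : ∀ i j, IsIntegral ℤ (P i j))
    (hLherm : cstar (⇑σ) L = L) (hMherm : cstar (⇑σ) M = M)
    (hLpd : (L.map ⇑φ).PosDef) (hMpd : (M.map ⇑φ).PosDef)
    (h : M * P = pprime (⇑σ) P * L) :
    cstar (⇑σ) P * M * P = σ P.det • L ∧ ∃ n : ℕ, P.det = (n : K) :=
  stmt13_general K hdeg σ hσne φ hφσ L M P hPint hLpd hMpd h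
end
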